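/- Let X be a Hausdorff space admitting a fixed-point free continuous involution τ and let q : X → X/τ be the quotient double covering. If 1 ≤ n ≤ secat(q) − 1, then the triple ((X,τ); ℝⁿ) satisfies the Borsuk–Ulam property. In particular, the ℤ/2-index of (X,τ) is at least secat(q) − 1. -/

import Mathlib

open Metric Set

/-- A continuous local section of `p` over `U`. -/
def IsLocalSection {E B : Type*} [TopologicalSpace E] [TopologicalSpace B]
    (p : E → B) (U : Set B) : Prop :=
  ∃ s : U → E, Continuous s ∧ ∀ x : U, p (s x) = (x : B)

/-- The sectional category of a map `p : E → B`: the least number of open sets covering `B`,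
over each of which `p` admits a continuous local section; `⊤` if no finite cover exists. -/
noncomputable def secat {E B : Type*} [TopologicalSpace E] [TopologicalSpace B]
    (p : E → B) : ℕ∞ :=
  sInf {n : ℕ∞ | ∃ k : ℕ, n = (k : ℕ∞) ∧ ∃ U : Fin k → Set B,
    (∀ i, IsOpen (U i)) ∧ (⋃ i, U i) = Set.univ ∧ ∀ i, IsLocalSection p (U i)}

/-- A subset is contractible within the ambient space if its inclusion is nullhomotopic. -/
def ContractibleIn {X : Type*} [TopologicalSpace X] (U : Set X) : Prop :=
  ContinuousMap.Nullhomotopic (⟨(Subtype.val : U → X), continuous_subtype_val⟩ : C(U, X))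

/-- Lusternik–Schnirelmann category: least number of open sets covering `X`, each
contractible within `X`. -/
noncomputable def LScat (X : Type*) [TopologicalSpace X] : ℕ∞ :=
  sInf {n : ℕ∞ | ∃ k : ℕ, n = (k : ℕ∞) ∧ ∃ U : Fin k → Set X,
    (∀ i, IsOpen (U i)) ∧ (⋃ i, U i) = Set.univ ∧ ∀ i, ContractibleIn (U i)}

/-- Hurewicz fibration: the homotopy lifting property with respect to all spaces. -/
def IsHurewiczFibration {E B : Type*} [TopologicalSpace E] [TopologicalSpace B]
    (p : E → B) : Prop :=
  ∀ (Z : Type*) [TopologicalSpace Z] (H : Z × unitInterval → B) (h : Z → E),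
    Continuous H → Continuous h → (∀ z, p (h z) = H (z, 0)) →
    ∃ G : Z × unitInterval → E, Continuous G ∧ (∀ z, G (z, 0) = h z) ∧ ∀ w, p (G w) = H w

/-- The orbit relation of the action generated by a map `τ`. -/
def orbitRelOf {X : Type*} (τ : X → X) : X → X → Prop := fun x y => y = τ x

/-- Quotient of `X` by the (involutive) map `τ`, with the quotient topology. -/
abbrev InvolQuot {X : Type*} [TopologicalSpace X] (τ : X → X) : Type _ := Quot (orbitRelOf τ)

/-- The quotient map `X → X/τ`. -/
def involQuotMk {X : Type*} [TopologicalSpace X] (τ : X → X) : X → InvolQuot τ :=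
  Quot.mk (orbitRelOf τ)

/-- The ordered configuration space `F(Y,2)` of two distinct points of `Y`. -/
abbrev Conf2 (Y : Type*) [TopologicalSpace Y] : Type _ := {p : Y × Y // p.1 ≠ p.2}

/-- The swap involution `τ₂` on `F(Y,2)`. -/
def confSwap {Y : Type*} [TopologicalSpace Y] : Conf2 Y → Conf2 Y :=
  fun p => ⟨(p.1.2, p.1.1), Ne.symm p.2⟩

/-- The unordered configuration space `D(Y,2) = F(Y,2)/τ₂`. -/
abbrev UConf2 (Y : Type*) [TopologicalSpace Y] : Type _ := InvolQuot (confSwap (Y := Y))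

/-- The quotient double covering `q^Y : F(Y,2) → D(Y,2)`. -/
def confQuotMk (Y : Type*) [TopologicalSpace Y] : Conf2 Y → UConf2 Y :=
  involQuotMk confSwap

/-- The Borsuk–Ulam property for the triple `((X,τ);Y)`. -/
def BorsukUlamProperty (X : Type*) [TopologicalSpace X] (τ : X → X)
    (Y : Type*) [TopologicalSpace Y] : Prop :=
  ∀ f : X → Y, Continuous f → ∃ x : X, f (τ x) = f x

/-- The `m`-sphere as the unit sphere of `ℝ^{m+1}`. -/
abbrev Sph (m : ℕ) : Type := Metric.sphere (0 : EuclideanSpace ℝ (Fin (m + 1))) 1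

/-- The antipodal involution on the sphere. -/
noncomputable def antipodal (m : ℕ) : Sph m → Sph m := fun x => -x

/-- The smallest dimension of a Euclidean space into which `Y` embeds. -/
noncomputable def embDim (Y : Type*) [TopologicalSpace Y] : ℕ∞ :=
  sInf {n : ℕ∞ | ∃ k : ℕ, n = (k : ℕ∞) ∧
    ∃ e : Y → EuclideanSpace ℝ (Fin k), Topology.IsEmbedding e}

/-- The `ℤ/2`-index of `(X,τ)`: the least `n` such that there is a continuous map
`X → Sⁿ` which is equivariant for `τ` and the antipodal involution. -/
noncomputable def z2Index {X : Type*} [TopologicalSpace X] (τ : X → X) : ℕ∞ :=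
  sInf {n : ℕ∞ | ∃ k : ℕ, n = (k : ℕ∞) ∧
    ∃ g : X → Sph k, Continuous g ∧ ∀ x, g (τ x) = antipodal k (g x)}

section CW

/-- A (classical) CW-complex structure on a Hausdorff space `X`: a family of cells
with characteristic maps from closed disks, the images of the open disks partitioning `X`,
each attaching map sending the boundary sphere into cells of lower dimension, together with
closure finiteness (C) and the weak topology (W). -/
structure CWStructure (X : Type u) [TopologicalSpace X] : Type (u + 1) where
  /-- index type of the `n`-cells -/
  cell : ℕ → Type u
  /-- characteristic map of each `n`-cell -/
  map : (n : ℕ) → cell n → EuclideanSpace ℝ (Fin n) → X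
  continuousOn : ∀ n i, ContinuousOn (map n i) (closedBall 0 1)
  injOn : ∀ n i, Set.InjOn (map n i) (ball 0 1)
  partition : ∀ x : X, ∃! p : Σ n, cell n, x ∈ map p.1 p.2 '' ball 0 1
  mapsTo_boundary : ∀ n i, Set.MapsTo (map n i) (sphere 0 1)
    (⋃ (m : ℕ) (_ : m < n) (j : cell m), map m j '' closedBall 0 1)
  closureFinite : ∀ n i, {p : Σ m, cell m |
    (map p.1 p.2 '' ball 0 1 ∩ map n i '' closedBall 0 1).Nonempty}.Finite
  weakTopology : ∀ A : Set X,
    (∀ n i, IsClosed (A ∩ map n i '' closedBall 0 1)) → IsClosed A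

namespace CWStructure

variable {X : Type u} [TopologicalSpace X] (S : CWStructure X)

/-- The `n`-skeleton of a CW structure. -/
def skeleton (n : ℕ) : Set X :=
  ⋃ (m : ℕ) (_ : m ≤ n) (j : S.cell m), S.map m j '' closedBall 0 1

/-- The CW structure has dimension at most `d`. -/
def DimLE (d : ℕ) : Prop := ∀ n, d < n → IsEmpty (S.cell n)

/-- The CW structure has dimension exactly `d`. -/
def DimEq (d : ℕ) : Prop := S.DimLE d ∧ Nonempty (S.cell d)

/-- A self-map is cellular if it maps each skeleton into itself. -/
def Cellular (f : X → X) : Prop := ∀ n, Set.MapsTo f (S.skeleton n) (S.skeleton n)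

end CWStructure

/-- The homotopical dimension of `X` is at most `d`: `X` is homotopy equivalent to a
CW complex of dimension at most `d`. -/
def HDimLE (X : Type u) [TopologicalSpace X] (d : ℕ) : Prop :=
  ∃ (Z : Type u) (_ : TopologicalSpace Z) (S : CWStructure Z),
    S.DimLE d ∧ Nonempty (ContinuousMap.HomotopyEquiv Z X)

end CW

/-
If `f : X → ℝ^{m+1}` had `f (τ x) ≠ f x` everywhere, the normalised difference
`x ↦ (f x - f (τ x)) / ‖f x - f (τ x)‖` would be an equivariant map `X → Sᵐ`. Any such map `g`
bounds `secat q` by `m + 1`: the open sets `{x | 0 < g x i}` contain no pair `{x, τ x}`, so `q`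
maps each of them homeomorphically onto an open set, and together with their `τ`-translates they
cover `X`. Hence `secat q - 1 ≤ ind_{ℤ₂}(X) ≤ m`.
-/

section InvolutionQuotient

variable {X : Type*} [TopologicalSpace X] {τ : X → X}

theorem involQuotMk_apply_self (x : X) : involQuotMk τ (τ x) = involQuotMk τ x :=
  (Quot.sound (show orbitRelOf τ x (τ x) from rfl)).symm

theorem involQuotMk_eq_iff (hτ : Function.Involutive τ) {x y : X} :
    involQuotMk τ x = involQuotMk τ y ↔ y = x ∨ y = τ x := by
  refine ⟨fun h => ?_, ?_⟩
  · -- `z ↦ {z, τ z}` is constant on orbits, hence descends to the quotient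
    have horbit : ({x, τ x} : Set X) = {y, τ y} :=
      congrArg (Quot.lift (fun z => ({z, τ z} : Set X)) (by
        rintro a _ rfl
        rw [hτ a, pair_comm])) h
    have hy : y ∈ ({x, τ x} : Set X) := by
      rw [horbit]
      exact mem_insert y _
    simpa only [mem_insert_iff, mem_singleton_iff] using hy
  · rintro (rfl | rfl)
    · rfl
    · exact (involQuotMk_apply_self x).symm

theorem preimage_involQuotMk_image (hτ : Function.Involutive τ) (S : Set X) :
    involQuotMk τ ⁻¹' (involQuotMk τ '' S) = S ∪ τ ⁻¹' S := by
  ext x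
  simp only [mem_preimage, mem_image, mem_union, involQuotMk_eq_iff hτ]
  constructor
  · rintro ⟨s, hs, rfl | rfl⟩
    · exact Or.inl hs
    · exact Or.inr (by rwa [hτ s])
  · rintro (hx | hx)
    · exact ⟨x, hx, Or.inl rfl⟩
    · exact ⟨τ x, hx, Or.inr (hτ x).symm⟩

theorem isOpenMap_involQuotMk (hτc : Continuous τ) (hτ : Function.Involutive τ) :
    IsOpenMap (involQuotMk τ) := fun S hS => by
  rw [← isQuotientMap_quot_mk.isOpen_preimage]
  change IsOpen (involQuotMk τ ⁻¹' (involQuotMk τ '' S))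
  rw [preimage_involQuotMk_image hτ]
  exact hS.union (hS.preimage hτc)

theorem isLocalSection_involQuotMk_image (hτc : Continuous τ) (hτ : Function.Involutive τ)
    {A : Set X} (hA : IsOpen A) (hdisj : ∀ x ∈ A, τ x ∉ A) :
    IsLocalSection (involQuotMk τ) (involQuotMk τ '' A) := by
  have hinj : (A.domRestrict (involQuotMk τ)).Injective := by
    rintro ⟨x, hx⟩ ⟨y, hy⟩ h
    rcases (involQuotMk_eq_iff hτ).1 h with rfl | rfl
    · rfl
    · exact absurd hy (hdisj x hx)
  have hemb : Topology.IsOpenEmbedding (A.domRestrict (involQuotMk τ)) :=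
    .of_continuous_injective_isOpenMap (continuous_quot_mk.comp continuous_subtype_val) hinj
      ((isOpenMap_involQuotMk hτc hτ).comp hA.isOpenMap_subtype_val)
  rw [← range_domRestrict]
  let e := hemb.isEmbedding.toHomeomorph
  exact ⟨fun u => (e.symm u : X), continuous_subtype_val.comp e.symm.continuous,
    fun u => congrArg Subtype.val (e.apply_symm_apply u)⟩

theorem secat_involQuotMk_le (hτc : Continuous τ) (hτ : Function.Involutive τ) {k : ℕ}
    (A : Fin k → Set X) (hA : ∀ i, IsOpen (A i)) (hdisj : ∀ i, ∀ x ∈ A i, τ x ∉ A i)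
    (hcover : ∀ x, ∃ i, x ∈ A i ∨ τ x ∈ A i) :
    secat (involQuotMk τ) ≤ k := by
  refine sInf_le ⟨k, rfl, fun i => involQuotMk τ '' A i,
    fun i => isOpenMap_involQuotMk hτc hτ _ (hA i), ?_,
    fun i => isLocalSection_involQuotMk_image hτc hτ (hA i) (hdisj i)⟩
  refine eq_univ_of_forall (Quot.ind fun x => mem_iUnion.2 ?_)
  obtain ⟨i, hx | hx⟩ := hcover x
  · exact ⟨i, x, hx, rfl⟩
  · exact ⟨i, τ x, hx, involQuotMk_apply_self x⟩

theorem secat_involQuotMk_le_of_equivariant (hτc : Continuous τ) (hτ : Function.Involutive τ)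
    {m : ℕ} {g : X → Sph m} (hg : Continuous g) (hgτ : ∀ x, g (τ x) = antipodal m (g x)) :
    secat (involQuotMk τ) ≤ (m + 1 : ℕ) := by
  have hcoord : ∀ x i, (g (τ x) : EuclideanSpace ℝ (Fin (m + 1))) i = -(g x : EuclideanSpace ℝ (Fin (m + 1))) i := by
    intro x i
    rw [hgτ]
    rfl
  refine secat_involQuotMk_le hτc hτ (fun i => {x | 0 < (g x : EuclideanSpace ℝ _) i})
    (fun i => isOpen_lt continuous_const (by fun_prop)) (fun i x hx hτx => ?_) fun x => ?_
  · rw [mem_ofPred_eq, hcoord] at hτx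
    exact lt_asymm hx (neg_pos.1 hτx)
  · obtain ⟨i, hi⟩ : ∃ i, (g x : EuclideanSpace ℝ (Fin (m + 1))) i ≠ 0 := by
      by_contra! h
      exact ne_zero_of_mem_unit_sphere (g x) (by ext i; exact h i)
    refine ⟨i, hi.lt_or_gt.symm.imp id fun hneg => ?_⟩
    rw [mem_ofPred_eq, hcoord]
    exact neg_pos.2 hneg

theorem z2Index_le_of_equivariant {m : ℕ} {g : X → Sph m} (hg : Continuous g)
    (hgτ : ∀ x, g (τ x) = antipodal m (g x)) : z2Index τ ≤ m :=
  sInf_le ⟨m, rfl, g, hg, hgτ⟩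

theorem secat_involQuotMk_sub_one_le_z2Index (hτc : Continuous τ) (hτ : Function.Involutive τ) :
    secat (involQuotMk τ) - 1 ≤ z2Index τ := by
  refine le_sInf ?_
  rintro _ ⟨k, rfl, g, hg, hgτ⟩
  rw [tsub_le_iff_right]
  exact (secat_involQuotMk_le_of_equivariant hτc hτ hg hgτ).trans_eq (by push_cast; rfl)

theorem exists_equivariant_sphere_of_not_borsukUlam (hτc : Continuous τ)
    (hτ : Function.Involutive τ) {m : ℕ}
    (h : ¬ BorsukUlamProperty X τ (EuclideanSpace ℝ (Fin (m + 1)))) :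
    ∃ g : X → Sph m, Continuous g ∧ ∀ x, g (τ x) = antipodal m (g x) := by
  simp only [BorsukUlamProperty, not_forall, not_exists] at h
  obtain ⟨f, hf, hne⟩ := h
  have hd : ∀ x, f x - f (τ x) ≠ 0 := fun x => sub_ne_zero.2 fun h => hne x h.symm
  refine ⟨fun x => ⟨‖f x - f (τ x)‖⁻¹ • (f x - f (τ x)),
    mem_sphere_zero_iff_norm.2 (norm_smul_inv_norm (hd x))⟩, ?_, fun x => ?_⟩
  · exact ((hf.sub (hf.comp hτc)).norm.inv₀ fun x => norm_ne_zero_iff.2 (hd x)).smul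
      (hf.sub (hf.comp hτc)) |>.subtype_mk _
  · refine Subtype.ext ?_
    change _ • (f (τ x) - f (τ (τ x))) = -(_ • (f x - f (τ x)))
    rw [hτ x, ← neg_sub, norm_neg, smul_neg]

end InvolutionQuotient

theorem stmt_16_general {X : Type*} [TopologicalSpace X]
    (τ : X → X) (hτc : Continuous τ) (hτinv : Function.Involutive τ) :
    (∀ n : ℕ, 1 ≤ n → (n : ℕ∞) ≤ secat (involQuotMk τ) - 1 →
      BorsukUlamProperty X τ (EuclideanSpace ℝ (Fin n))) ∧
    secat (involQuotMk τ) - 1 ≤ z2Index τ := by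
  have hindex := secat_involQuotMk_sub_one_le_z2Index hτc hτinv
  refine ⟨fun n hn hle => ?_, hindex⟩
  obtain ⟨m, rfl⟩ := Nat.exists_eq_add_of_le' hn
  by_contra hbu
  obtain ⟨g, hg, hgτ⟩ := exists_equivariant_sphere_of_not_borsukUlam hτc hτinv hbu
  have hle' : ((m + 1 : ℕ) : ℕ∞) ≤ m := hle.trans (hindex.trans (z2Index_le_of_equivariant hg hgτ))
  exact absurd (Nat.cast_le.1 hle') (by omega)

/-- if `1 ≤ n ≤ secat q − 1` then `((X,τ);ℝⁿ)` satisfies the BUP; in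
particular the `ℤ/2`-index of `(X,τ)` is at least `secat q − 1`. -/
theorem stmt_16 {X : Type*} [TopologicalSpace X] [T2Space X]
    (τ : X → X) (hτc : Continuous τ) (hτinv : Function.Involutive τ)
    (hτfree : ∀ x, τ x ≠ x) :
    (∀ n : ℕ, 1 ≤ n → (n : ℕ∞) ≤ secat (involQuotMk τ) - 1 →
      BorsukUlamProperty X τ (EuclideanSpace ℝ (Fin n))) ∧
    secat (involQuotMk τ) - 1 ≤ z2Index τ :=
  stmt_16_general τ hτc hτinv
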